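/- arXiv:2303.09362 — 3 statements merged into one kernel-verified Lean document; each statement's English description precedes it below -/
import Mathlib

section
/- Let f : ℝ × [0,∞) → ℝ be locally Lipschitz in its first argument uniformly in time, and let S̄ : [0,∞) → subsets of ℝ be a moving closed convex constraint. If x and x̃ are two absolutely continuous solutions on [0,T] of the perturbed sweeping process ẋ(t) ∈ f(x(t),t) − N_{S̄(t)}(x(t)) with x(t), x̃(t) ∈ S̄(t) for all t, and x(0) = x̃(0), then x(t) = x̃(t) for all t ∈ [0,T]. -/
/-!
Where `x > x̃`, monotonicity of the normal cone gives `(x - x̃)' ≤ f(x) - f(x̃) ≤ L (x - x̃)`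
almost everywhere. Starting from the last time `c` before `t` with `x ≤ x̃`, the integral form of
Grönwall's inequality therefore forbids `x(t) > x̃(t)`; by symmetry two solutions that meet at
some time agree on a right neighbourhood of it, where both stay in a neighbourhood on which
every `f(·, t)` is `L`-Lipschitz. Continuous induction on `[0, T]` then gives `x = x̃`.
-/

open MeasureTheory

/-- Normal cone of a set `C ⊆ ℝ` at `x` (empty if `x ∉ C`). -/
def normalCone1 (C : Set ℝ) (x : ℝ) : Set ℝ :=
  {s : ℝ | x ∈ C ∧ ∀ c ∈ C, s * (c - x) ≤ 0}

/-- `x` is an absolutely continuous solution on `[0,T]` of the perturbed sweeping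
process `ẋ(t) ∈ f(x(t),t) − N_{S̄(t)}(x(t))`, `x(t) ∈ S̄(t)`. -/
def IsSweepingSolution (f : ℝ → ℝ → ℝ) (Sbar : ℝ → Set ℝ) (T : ℝ) (x : ℝ → ℝ) : Prop :=
  (∀ t ∈ Set.Icc (0 : ℝ) T, x t ∈ Sbar t) ∧
  ∃ x' : ℝ → ℝ, IntegrableOn x' (Set.Icc (0 : ℝ) T) ∧
    (∀ t ∈ Set.Icc (0 : ℝ) T, x t = x 0 + ∫ s in (0 : ℝ)..t, x' s) ∧
    (∀ᵐ t ∂(volume.restrict (Set.Icc (0 : ℝ) T)),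
      ∃ ν ∈ normalCone1 (Sbar t) (x t), x' t = f (x t) t - ν)

open Set Filter Topology Real

theorem sub_mul_sub_nonneg_of_mem_normalCone1 {C : Set ℝ} {x y ν η : ℝ}
    (hν : ν ∈ normalCone1 C x) (hη : η ∈ normalCone1 C y) : 0 ≤ (ν - η) * (x - y) := by
  have h₁ := hν.2 y hη.1
  have h₂ := hη.2 x hν.1
  linarith [show (ν - η) * (x - y) = -(ν * (y - x)) - η * (x - y) by ring]

theorem intervalIntegral_nonpos_of_le_mul_intervalIntegral {w : ℝ → ℝ} {L a b : ℝ}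
    (hab : a ≤ b) (hw : ContinuousOn w (Icc a b))
    (h : ∀ u ∈ Ioo a b, w u ≤ L * ∫ s in a..u, w s) : ∫ s in a..b, w s ≤ 0 := by
  set I : ℝ → ℝ := fun u => ∫ s in a..u, w s
  have hI_cont : ContinuousOn I (Icc a b) := by
    have := intervalIntegral.continuousOn_primitive_interval (μ := volume) (a := a) (b := b)
      (f := w) (by rw [uIcc_of_le hab]; exact hw.integrableOn_Icc)
    rwa [uIcc_of_le hab] at this
  have hI_deriv : ∀ u ∈ Ioo a b, HasDerivAt I (w u) u := fun u hu =>
    intervalIntegral.integral_hasDerivAt_right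
      ((hw.mono (Icc_subset_Icc_right hu.2.le)).intervalIntegrable_of_Icc hu.1.le)
      ((hw.mono Ioo_subset_Icc_self).stronglyMeasurableAtFilter isOpen_Ioo u hu)
      (hw.continuousAt (Icc_mem_nhds hu.1 hu.2))
  -- the integrating factor `exp (-L u)` turns `I' ≤ L I` into monotonicity
  have hanti : AntitoneOn (fun u => exp (-L * u) * I u) (Icc a b) := by
    refine antitoneOn_of_hasDerivWithinAt_nonpos (convex_Icc a b)
      ((by fun_prop : Continuous fun u => exp (-L * u)).continuousOn.mul hI_cont)
      (f' := fun u => exp (-L * u) * (w u - L * I u)) (fun u hu => ?_) (fun u hu => ?_)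
    · rw [interior_Icc] at hu ⊢
      have hexp : HasDerivAt (fun v => exp (-L * v)) (exp (-L * u) * -L) u := by
        simpa using ((hasDerivAt_id u).const_mul (-L)).exp
      exact (hexp.mul (hI_deriv u hu)).hasDerivWithinAt.congr_deriv (by ring)
    · rw [interior_Icc] at hu
      exact mul_nonpos_of_nonneg_of_nonpos (exp_pos _).le (by linarith [h u hu])
  have := hanti (left_mem_Icc.2 hab) (right_mem_Icc.2 hab) hab
  simp only [I, intervalIntegral.integral_same, mul_zero] at this
  exact nonpos_of_mul_nonpos_right this (exp_pos _)

theorem ContinuousOn.exists_nonpos_forall_pos_Ioc {w : ℝ → ℝ} {a b : ℝ} (hab : a ≤ b)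
    (hw : ContinuousOn w (Icc a b)) (ha : w a ≤ 0) (hb : 0 < w b) :
    ∃ c ∈ Ico a b, w c ≤ 0 ∧ ∀ u ∈ Ioc c b, 0 < w u := by
  set Z := Icc a b ∩ w ⁻¹' Iic 0
  have hZ_closed : IsClosed Z := hw.preimage_isClosed_of_isClosed isClosed_Icc isClosed_Iic
  have hZ_bdd : BddAbove Z := bddAbove_Icc.mono inter_subset_left
  have hcZ : sSup Z ∈ Z := hZ_closed.csSup_mem ⟨a, ⟨left_mem_Icc.2 hab, ha⟩⟩ hZ_bdd
  obtain ⟨⟨hac, hcb⟩, hwc⟩ := hcZ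
  refine ⟨sSup Z, ⟨hac, hcb.lt_of_ne ?_⟩, hwc, fun u hu => ?_⟩
  · intro hcb_eq
    rw [hcb_eq] at hwc
    exact absurd hwc (not_le.2 hb)
  · by_contra! hwu
    exact absurd (le_csSup hZ_bdd ⟨⟨hac.trans hu.1.le, hu.2⟩, hwu⟩) (not_le.2 hu.1)

theorem intervalIntegral_eq_sub_of_eq_add_integral {x g : ℝ → ℝ} {T a b : ℝ}
    (hg : IntegrableOn g (Icc 0 T)) (hx : ∀ t ∈ Icc 0 T, x t = x 0 + ∫ s in 0..t, g s)
    (ha : a ∈ Icc 0 T) (hb : b ∈ Icc 0 T) : ∫ s in a..b, g s = x b - x a := by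
  have hint : ∀ t ∈ Icc 0 T, IntervalIntegrable g volume 0 t := fun t ht =>
    (hg.mono_set (uIcc_subset_Icc (left_mem_Icc.2 (ht.1.trans ht.2)) ht)).intervalIntegrable
  rw [← intervalIntegral.integral_interval_sub_left (hint b hb) (hint a ha), hx b hb, hx a ha]
  ring

namespace IsSweepingSolution

variable {f : ℝ → ℝ → ℝ} {S : ℝ → Set ℝ} {T : ℝ} {x y : ℝ → ℝ}

theorem continuousOn (hx : IsSweepingSolution f S T x) : ContinuousOn x (Icc 0 T) := by
  obtain ⟨-, x', hx'_int, hx_eq, -⟩ := hx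
  refine ContinuousOn.congr (f := fun t => x 0 + ∫ s in Ioc 0 t, x' s)
    (continuousOn_const.add (intervalIntegral.continuousOn_primitive hx'_int)) fun t ht => ?_
  rw [hx_eq t ht, intervalIntegral.integral_of_le ht.1]

theorem sub_sub_sub_le_mul_integral (hx : IsSweepingSolution f S T x)
    (hy : IsSweepingSolution f S T y) {L a b : ℝ} (ha : 0 ≤ a) (hab : a ≤ b) (hb : b ≤ T)
    (hpos : ∀ u ∈ Ioc a b, y u < x u)
    (hf : ∀ u ∈ Ioc a b, f (x u) u - f (y u) u ≤ L * (x u - y u)) :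
    x b - y b - (x a - y a) ≤ L * ∫ u in a..b, (x u - y u) := by
  have hsub : Icc a b ⊆ Icc 0 T := Icc_subset_Icc ha hb
  have hw : ContinuousOn (fun u => L * (x u - y u)) (Icc a b) :=
    (continuousOn_const.mul (hx.continuousOn.sub hy.continuousOn)).mono hsub
  obtain ⟨-, x', hx'_int, hx_eq, hx_ae⟩ := hx
  obtain ⟨-, y', hy'_int, hy_eq, hy_ae⟩ := hy
  -- where `y < x`, monotonicity of the normal cone makes the constraint push `x - y` down
  have hae : ∀ᵐ u, u ∈ Ioc a b → x' u - y' u ≤ L * (x u - y u) := by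
    filter_upwards [(ae_restrict_iff' measurableSet_Icc).1 (hx_ae.and hy_ae)] with u hu hu_ab
    obtain ⟨⟨ν, hν, hx'u⟩, ⟨η, hη, hy'u⟩⟩ := hu (hsub (Ioc_subset_Icc_self hu_ab))
    have hνη : 0 ≤ ν - η := nonneg_of_mul_nonneg_left
      (sub_mul_sub_nonneg_of_mem_normalCone1 hν hη) (sub_pos.2 (hpos u hu_ab))
    linarith [hf u hu_ab]
  have hIoc : Ioc a b ⊆ Icc 0 T := Ioc_subset_Icc_self.trans hsub
  calc x b - y b - (x a - y a) = ∫ u in a..b, (x' u - y' u) := by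
        rw [intervalIntegral.integral_sub
            ((intervalIntegrable_iff_integrableOn_Icc_of_le hab).2 (hx'_int.mono_set hsub))
            ((intervalIntegrable_iff_integrableOn_Icc_of_le hab).2 (hy'_int.mono_set hsub)),
          intervalIntegral_eq_sub_of_eq_add_integral hx'_int hx_eq (hsub (left_mem_Icc.2 hab))
            (hsub (right_mem_Icc.2 hab)),
          intervalIntegral_eq_sub_of_eq_add_integral hy'_int hy_eq (hsub (left_mem_Icc.2 hab))
            (hsub (right_mem_Icc.2 hab))]
        ring
    _ ≤ ∫ u in a..b, L * (x u - y u) := by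
        rw [intervalIntegral.integral_of_le hab, intervalIntegral.integral_of_le hab]
        exact setIntegral_mono_on_ae ((hx'_int.sub hy'_int).mono_set hIoc)
          (hw.integrableOn_Icc.mono_set Ioc_subset_Icc_self) measurableSet_Ioc hae
    _ = L * ∫ u in a..b, (x u - y u) := intervalIntegral.integral_const_mul _ _

theorem le_of_lipschitzOnWith (hx : IsSweepingSolution f S T x)
    (hy : IsSweepingSolution f S T y) {s : Set ℝ} {L : NNReal} {a b : ℝ} (ha : 0 ≤ a)
    (hab : a ≤ b) (hb : b ≤ T) (hf : ∀ u ∈ Icc a b, LipschitzOnWith L (fun z => f z u) s)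
    (hxs : ∀ u ∈ Icc a b, x u ∈ s) (hys : ∀ u ∈ Icc a b, y u ∈ s) (hle : x a ≤ y a) :
    x b ≤ y b := by
  by_contra! hlt
  have hw : ContinuousOn (fun u => x u - y u) (Icc a b) :=
    (hx.continuousOn.sub hy.continuousOn).mono (Icc_subset_Icc ha hb)
  obtain ⟨c, hc, hwc, hpos⟩ :=
    hw.exists_nonpos_forall_pos_Ioc hab (sub_nonpos.2 hle) (sub_pos.2 hlt)
  have hlip : ∀ u ∈ Ioc c b, f (x u) u - f (y u) u ≤ L * (x u - y u) := fun u hu => by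
    have hu' : u ∈ Icc a b := ⟨hc.1.trans hu.1.le, hu.2⟩
    have := (hf u hu').dist_le_mul _ (hxs u hu') _ (hys u hu')
    rw [Real.dist_eq, Real.dist_eq, abs_of_pos (hpos u hu)] at this
    exact (le_abs_self _).trans this
  have hgronwall : ∀ u ∈ Ioc c b, x u - y u ≤ L * ∫ v in c..u, (x v - y v) := fun u hu => by
    have := hx.sub_sub_sub_le_mul_integral hy (ha.trans hc.1) hu.1.le (hu.2.trans hb)
      (fun v hv => sub_pos.1 (hpos v ⟨hv.1, hv.2.trans hu.2⟩))
      (fun v hv => hlip v ⟨hv.1, hv.2.trans hu.2⟩)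
    linarith
  have hint := intervalIntegral_nonpos_of_le_mul_intervalIntegral hc.2.le
    (hw.mono (Icc_subset_Icc_left hc.1)) fun u hu => hgronwall u (Ioo_subset_Ioc_self hu)
  have hb_mem : b ∈ Ioc c b := ⟨hc.2, le_rfl⟩
  linarith [hpos b hb_mem, hgronwall b hb_mem, mul_nonpos_of_nonneg_of_nonpos L.coe_nonneg hint]

theorem eventually_eq_nhdsGT (hx : IsSweepingSolution f S T x)
    (hy : IsSweepingSolution f S T y)
    (hf : ∀ x₀ : ℝ, ∃ s ∈ 𝓝 x₀, ∃ L : NNReal,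
      ∀ t ∈ Icc 0 T, LipschitzOnWith L (fun z => f z t) s)
    {t : ℝ} (ht : t ∈ Ico 0 T) (heq : x t = y t) : ∀ᶠ u in 𝓝[>] t, x u = y u := by
  obtain ⟨s, hs, L, hL⟩ := hf (x t)
  have hIcc : Icc 0 T ∈ 𝓝[≥] t := Icc_mem_nhdsGE_of_mem ht
  have hxs : ∀ᶠ u in 𝓝[≥] t, x u ∈ s :=
    (hx.continuousOn t (Ico_subset_Icc_self ht)).mono_of_mem_nhdsWithin hIcc hs
  have hys : ∀ᶠ u in 𝓝[≥] t, y u ∈ s :=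
    (hy.continuousOn t (Ico_subset_Icc_self ht)).mono_of_mem_nhdsWithin hIcc (heq ▸ hs)
  obtain ⟨b, htb, hsub⟩ := mem_nhdsGE_iff_exists_Icc_subset.1 (hxs.and (hys.and hIcc))
  filter_upwards [Icc_mem_nhdsGT htb] with u hu
  have hsub' : ∀ v ∈ Icc t u, x v ∈ s ∧ y v ∈ s ∧ v ∈ Icc 0 T := fun v hv =>
    hsub (Icc_subset_Icc_right hu.2 hv)
  have hlip : ∀ v ∈ Icc t u, LipschitzOnWith L (fun z => f z v) s := fun v hv =>
    hL v (hsub' v hv).2.2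
  have huT : u ≤ T := (hsub' u (right_mem_Icc.2 hu.1)).2.2.2
  exact le_antisymm
    (hx.le_of_lipschitzOnWith hy ht.1 hu.1 huT hlip (fun v hv => (hsub' v hv).1)
      (fun v hv => (hsub' v hv).2.1) heq.le)
    (hy.le_of_lipschitzOnWith hx ht.1 hu.1 huT hlip (fun v hv => (hsub' v hv).2.1)
      (fun v hv => (hsub' v hv).1) heq.ge)

end IsSweepingSolution

theorem sweeping_process_uniqueness_general
    (f : ℝ → ℝ → ℝ) (Sbar : ℝ → Set ℝ) (T : ℝ)
    -- `f` locally Lipschitz in the state, uniformly in time: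
    (hf : ∀ x₀ : ℝ, ∃ s ∈ nhds x₀, ∃ L : NNReal,
      ∀ t ∈ Set.Icc (0 : ℝ) T, LipschitzOnWith L (fun y => f y t) s)
    (x xt : ℝ → ℝ)
    (hx : IsSweepingSolution f Sbar T x)
    (hxt : IsSweepingSolution f Sbar T xt)
    (h0 : x 0 = xt 0) :
    ∀ t ∈ Set.Icc (0 : ℝ) T, x t = xt t := by
  have hclosed : IsClosed ({u | x u = xt u} ∩ Icc 0 T) := by
    rw [inter_comm]
    exact isClosed_Icc.isClosed_eq hx.continuousOn hxt.continuousOn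
  exact fun t ht => hclosed.Icc_subset_of_forall_mem_nhdsWithin h0
    (fun u hu => hx.eventually_eq_nhdsGT hxt hf hu.2 hu.1) ht

theorem sweeping_process_uniqueness
    (f : ℝ → ℝ → ℝ) (Sbar : ℝ → Set ℝ) (T : ℝ) (hT : 0 < T)
    -- `f` locally Lipschitz in the state, uniformly in time:
    (hf : ∀ x₀ : ℝ, ∃ s ∈ nhds x₀, ∃ L : NNReal,
      ∀ t ∈ Set.Icc (0 : ℝ) T, LipschitzOnWith L (fun y => f y t) s)
    -- moving closed convex constraint:
    (hS : ∀ t ∈ Set.Icc (0 : ℝ) T, IsClosed (Sbar t) ∧ Convex ℝ (Sbar t))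
    (x xt : ℝ → ℝ)
    (hx : IsSweepingSolution f Sbar T x)
    (hxt : IsSweepingSolution f Sbar T xt)
    (h0 : x 0 = xt 0) :
    ∀ t ∈ Set.Icc (0 : ℝ) T, x t = xt t :=
  sweeping_process_uniqueness_general f Sbar T hf x xt hx hxt h0
end

section
/- Let T₁, …, T_N be closed convex cones in ℝⁿ each containing a fixed closed convex cone T (i.e., T ⊆ T_j for all j), let E ⊆ ℝⁿ be a subspace with T + E = ℝⁿ, and let v ∈ ℝⁿ. Denote by P_j = P_{T_j,E}(v) the unique minimizer of ‖w − v‖ over {w ∈ T_j : w − v ∈ E}, and P = P_{T,E}(v) the corresponding minimizer for T. If u is a convex combination u = Σ λ_j P_j (λ_j ≥ 0, Σ λ_j = 1) with u ∈ T, then u = P. -/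
/-!
Every `P_j` is feasible for the problem defining `P` up to the constraint `P_j ∈ T`, and, since
`P` is feasible for the larger cone `T_j`, it is at least as close to `v` as `P`. Both the affine
constraint `w - v ∈ E` and the ball `‖w - v‖ ≤ ‖P - v‖` are convex, so `u` inherits them; as
`u ∈ T`, it is then a minimizer for `T`, hence equal to `P`.
-/

open Metric

section ObliqueProjection

variable {V : Type*} [NormedAddCommGroup V] [NormedSpace ℝ V]

/-- The paper's `P = P_{T,E}(v)`, as a predicate on `P`. -/
def IsObliqueProjection (T : Set V) (E : Submodule ℝ V) (v P : V) : Prop :=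
  P ∈ T ∧ P - v ∈ E ∧ ∀ w ∈ T, w - v ∈ E → ‖P - v‖ ≤ ‖w - v‖

theorem IsObliqueProjection.norm_sub_le_of_subset {T T' : Set V} {E : Submodule ℝ V}
    {v P P' : V} (hP : IsObliqueProjection T E v P) (hP' : IsObliqueProjection T' E v P')
    (hTT' : T ⊆ T') : ‖P' - v‖ ≤ ‖P - v‖ :=
  hP'.2.2 P (hTT' hP.1) hP.2.1

theorem sum_smul_mem_mk'_inter_closedBall {ι : Type*} {s : Finset ι} {w : ι → ℝ} {p : ι → V}
    {E : Submodule ℝ V} {v : V} {r : ℝ} (hw₀ : ∀ i ∈ s, 0 ≤ w i) (hw₁ : ∑ i ∈ s, w i = 1)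
    (hp : ∀ i ∈ s, p i ∈ (AffineSubspace.mk' v E : Set V) ∩ closedBall v r) :
    ∑ i ∈ s, w i • p i ∈ (AffineSubspace.mk' v E : Set V) ∩ closedBall v r :=
  ((AffineSubspace.mk' v E).convex.inter (convex_closedBall v r)).sum_mem hw₀ hw₁ hp

theorem IsObliqueProjection.eq_of_norm_sub_le {T : Set V} {E : Submodule ℝ V} {v P u : V}
    (hP : IsObliqueProjection T E v P)
    (huniq : ∀ w ∈ T, w - v ∈ E → ‖w - v‖ = ‖P - v‖ → w = P)
    (huT : u ∈ T) (huE : u - v ∈ E) (hle : ‖u - v‖ ≤ ‖P - v‖) : u = P :=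
  huniq u huT huE (hle.antisymm (hP.2.2 u huT huE))

end ObliqueProjection

theorem convex_combination_of_oblique_projections_general {n N : ℕ}
    (T : Set (EuclideanSpace ℝ (Fin n))) (Tj : Fin N → Set (EuclideanSpace ℝ (Fin n)))
    (hsub : ∀ j, T ⊆ Tj j)
    (E : Submodule ℝ (EuclideanSpace ℝ (Fin n)))
    (v : EuclideanSpace ℝ (Fin n))
    (P : EuclideanSpace ℝ (Fin n)) (Pj : Fin N → EuclideanSpace ℝ (Fin n))
    -- each `Pj j` is the minimizer of `‖w - v‖` over `{w ∈ Tj j : w - v ∈ E}`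
    (hPj : ∀ j, Pj j ∈ Tj j ∧ Pj j - v ∈ E ∧
      ∀ w ∈ Tj j, w - v ∈ E → ‖Pj j - v‖ ≤ ‖w - v‖)
    -- `P` is the minimizer for `T`, and it is unique
    (hP : P ∈ T ∧ P - v ∈ E ∧ ∀ w ∈ T, w - v ∈ E → ‖P - v‖ ≤ ‖w - v‖)
    (hPuniq : ∀ w ∈ T, w - v ∈ E → ‖w - v‖ = ‖P - v‖ → w = P)
    (lam : Fin N → ℝ) (hlam : ∀ j, 0 ≤ lam j) (hsum : ∑ j, lam j = 1)
    (u : EuclideanSpace ℝ (Fin n)) (hu : u = ∑ j, lam j • Pj j) (huT : u ∈ T) :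
    u = P := by
  have hPj_mem : ∀ j ∈ Finset.univ,
      Pj j ∈ (AffineSubspace.mk' v E : Set _) ∩ closedBall v ‖P - v‖ := fun j _ =>
    ⟨AffineSubspace.mem_mk'.2 (hPj j).2.1,
      mem_closedBall_iff_norm.2 (IsObliqueProjection.norm_sub_le_of_subset hP (hPj j) (hsub j))⟩
  obtain ⟨huE, hu_ball⟩ :=
    hu ▸ sum_smul_mem_mk'_inter_closedBall (fun j _ => hlam j) hsum hPj_mem
  exact IsObliqueProjection.eq_of_norm_sub_le hP hPuniq huT (AffineSubspace.mem_mk'.1 huE)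
    (mem_closedBall_iff_norm.1 hu_ball)

theorem convex_combination_of_oblique_projections {n N : ℕ}
    (T : Set (EuclideanSpace ℝ (Fin n))) (Tj : Fin N → Set (EuclideanSpace ℝ (Fin n)))
    (hTclosed : IsClosed T) (hTconv : Convex ℝ T)
    (hTcone : ∀ c : ℝ, 0 ≤ c → ∀ w ∈ T, c • w ∈ T)
    (hTjclosed : ∀ j, IsClosed (Tj j)) (hTjconv : ∀ j, Convex ℝ (Tj j))
    (hTjcone : ∀ j, ∀ c : ℝ, 0 ≤ c → ∀ w ∈ Tj j, c • w ∈ Tj j)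
    (hsub : ∀ j, T ⊆ Tj j)
    (E : Submodule ℝ (EuclideanSpace ℝ (Fin n)))
    (hTE : ∀ y : EuclideanSpace ℝ (Fin n), ∃ w ∈ T, ∃ e ∈ E, y = w + e)
    (v : EuclideanSpace ℝ (Fin n))
    (P : EuclideanSpace ℝ (Fin n)) (Pj : Fin N → EuclideanSpace ℝ (Fin n))
    -- each `Pj j` is the minimizer of `‖w - v‖` over `{w ∈ Tj j : w - v ∈ E}`
    (hPj : ∀ j, Pj j ∈ Tj j ∧ Pj j - v ∈ E ∧
      ∀ w ∈ Tj j, w - v ∈ E → ‖Pj j - v‖ ≤ ‖w - v‖)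
    -- `P` is the minimizer for `T`, and it is unique
    (hP : P ∈ T ∧ P - v ∈ E ∧ ∀ w ∈ T, w - v ∈ E → ‖P - v‖ ≤ ‖w - v‖)
    (hPuniq : ∀ w ∈ T, w - v ∈ E → ‖w - v‖ = ‖P - v‖ → w = P)
    (lam : Fin N → ℝ) (hlam : ∀ j, 0 ≤ lam j) (hsum : ∑ j, lam j = 1)
    (u : EuclideanSpace ℝ (Fin n)) (hu : u = ∑ j, lam j • Pj j) (huT : u ∈ T) :
    u = P :=
  convex_combination_of_oblique_projections_general T Tj hsub E v P Pj hPj hP hPuniq lam hlam hsum u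
    hu huT
end

section
/- Let K ⊆ ℝⁿ be a closed convex cone, E ⊆ ℝⁿ a subspace with E ∩ (K ∪ −K) = {0} and (K ∪ −K) + E = ℝⁿ, and set S = K ∪ (−K). Then for every x ∈ ℝⁿ, the set C_x = S ∩ (x + E) is nonempty, closed, and convex; in fact C_x equals either K ∩ (x + E) or (−K) ∩ (x + E). -/
/-! A point `s ∈ K` and a point `t ∈ -K` of the same translate `x + E` satisfy
`s - t = s + (-t) ∈ K ∩ E = {0}`, so they coincide. Hence the slice `(K ∪ -K) ∩ (x + E)` equals
`K ∩ (x + E)` or `(-K) ∩ (x + E)`, and is convex as the intersection of a convex set with an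
affine subspace. It is nonempty because `(K ∪ -K) + E` is the whole space. -/

theorem Set.union_inter_eq_left_or_right {α : Type*} {S T A : Set α}
    (h : ∀ s ∈ S ∩ A, ∀ t ∈ T ∩ A, s = t) :
    (S ∪ T) ∩ A = S ∩ A ∨ (S ∪ T) ∩ A = T ∩ A := by
  rw [Set.union_inter_distrib_right]
  rcases (S ∩ A).eq_empty_or_nonempty with hS | ⟨s, hs⟩
  · right
    rw [hS, Set.empty_union]
  · left
    exact Set.union_eq_left.2 fun t ht => ⟨h s hs t ht ▸ hs.1, ht.2⟩

theorem Convex.add_mem_of_smul_mem {𝕜 V : Type*} [Field 𝕜] [LinearOrder 𝕜]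
    [IsStrictOrderedRing 𝕜] [AddCommGroup V] [Module 𝕜 V] {K : Set V} (hconv : Convex 𝕜 K)
    (hcone : ∀ c : 𝕜, 0 ≤ c → ∀ w ∈ K, c • w ∈ K) {a b : V} (ha : a ∈ K) (hb : b ∈ K) :
    a + b ∈ K := by
  have hmid := hconv ha hb one_half_pos.le one_half_pos.le (add_halves 1)
  simpa [smul_add, smul_smul] using hcone 2 zero_le_two _ hmid

section

variable {V : Type*} [AddCommGroup V] {E : AddSubgroup V}

theorem eq_of_mem_of_mem_neg_of_sub_mem {K : Set V} (hadd : ∀ a ∈ K, ∀ b ∈ K, a + b ∈ K)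
    (hEK : (E : Set V) ∩ K ⊆ {0}) {x s t : V} (hs : s ∈ K) (ht : t ∈ -K)
    (hsx : s - x ∈ E) (htx : t - x ∈ E) : s = t := by
  have hK : s - t ∈ K := sub_eq_add_neg s t ▸ hadd s hs (-t) ht
  have hE : s - t ∈ E := by simpa using E.sub_mem hsx htx
  exact sub_eq_zero.1 (hEK ⟨hE, hK⟩)

theorem inter_setOf_sub_mem_nonempty {S : Set V}
    (hsurj : ∀ y : V, ∃ s ∈ S, ∃ e ∈ E, y = s + e) (x : V) :
    (S ∩ {y | y - x ∈ E}).Nonempty := by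
  obtain ⟨s, hs, e, he, rfl⟩ := hsurj x
  exact ⟨s, hs, by simpa using E.neg_mem he⟩

end

theorem slice_of_sector_convex {n : ℕ}
    (K : Set (EuclideanSpace ℝ (Fin n))) (hKclosed : IsClosed K) (hKconv : Convex ℝ K)
    (hKcone : ∀ c : ℝ, 0 ≤ c → ∀ w ∈ K, c • w ∈ K)
    (E : Submodule ℝ (EuclideanSpace ℝ (Fin n)))
    (hEK : (E : Set (EuclideanSpace ℝ (Fin n))) ∩ (K ∪ -K) = {0})
    (hsurj : ∀ y : EuclideanSpace ℝ (Fin n), ∃ s ∈ K ∪ -K, ∃ e ∈ E, y = s + e)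
    (x : EuclideanSpace ℝ (Fin n)) :
    ((K ∪ -K) ∩ {y | y - x ∈ E}).Nonempty ∧
    IsClosed ((K ∪ -K) ∩ {y | y - x ∈ E}) ∧
    Convex ℝ ((K ∪ -K) ∩ {y | y - x ∈ E}) ∧
    ((K ∪ -K) ∩ {y | y - x ∈ E} = K ∩ {y | y - x ∈ E} ∨
      (K ∪ -K) ∩ {y | y - x ∈ E} = (-K) ∩ {y | y - x ∈ E}) := by
  have hA_conv : Convex ℝ {y | y - x ∈ E} := (AffineSubspace.mk' x E).convex
  have hA_closed : IsClosed {y | y - x ∈ E} :=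
    E.closed_of_finiteDimensional.preimage (continuous_sub_right x)
  have hEK' : (E : Set _) ∩ K ⊆ {0} := hEK ▸ Set.inter_subset_inter_right _ Set.subset_union_left
  have hdich := Set.union_inter_eq_left_or_right (A := {y | y - x ∈ E}) fun s hs t ht =>
    eq_of_mem_of_mem_neg_of_sub_mem (E := E.toAddSubgroup)
      (fun _ ha _ hb => hKconv.add_mem_of_smul_mem hKcone ha hb) hEK' hs.1 ht.1 hs.2 ht.2
  refine ⟨inter_setOf_sub_mem_nonempty (E := E.toAddSubgroup) hsurj x,
    (hKclosed.union hKclosed.neg).inter hA_closed, ?_, hdich⟩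
  rcases hdich with h | h <;> rw [h]
  exacts [hKconv.inter hA_conv, hKconv.neg.inter hA_conv]
end
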